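/- arXiv:1201.5328 — 2 statements merged into one kernel-verified Lean document; each statement's English description precedes it below -/
import Mathlib

section
/- For every integer N ≥ 2, setting z = j_{N/2−1} (the first positive zero of the Bessel function J_{N/2−1}), one has (z² − 2) N² + 5 z² N − 2 z⁴ > 0. -/
open MeasureTheory Metric Set Filter Topology
open scoped RealInnerProductSpace

noncomputable section

abbrev euc (N : ℕ) := EuclideanSpace ℝ (Fin N)

/-- Bessel function of the first kind of order `ν`, via its power series. -/
def besselJ (ν : ℝ) (x : ℝ) : ℝ :=
  ∑' m : ℕ, ((-1 : ℝ) ^ m / (m.factorial * Real.Gamma (m + ν + 1))) *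
    (x / 2) ^ (2 * (m : ℝ) + ν)

/-- First positive zero of the Bessel function `J_ν`. -/
def besselJzero (ν : ℝ) : ℝ := sInf {x : ℝ | 0 < x ∧ besselJ ν x = 0}

/-- Volume of the unit ball of `ℝ^N`. -/
def ballVol (N : ℕ) : ℝ := (volume (ball (0 : euc N) 1)).toReal

/-- Perimeter: `(N-1)`-dimensional Hausdorff measure of the topological boundary. -/
def perim (N : ℕ) (Ω : Set (euc N)) : ℝ := (μH[(N : ℝ) - 1] (frontier Ω)).toReal

/-- First Dirichlet Laplacian eigenvalue: infimum of Rayleigh quotients over nonzero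
smooth functions compactly supported in `Ω`. -/
def firstEigenvalue (N : ℕ) (Ω : Set (euc N)) : ℝ :=
  sInf { R : ℝ | ∃ u : euc N → ℝ, ContDiff ℝ (⊤ : ℕ∞) u ∧ HasCompactSupport u ∧
    tsupport u ⊆ Ω ∧ u ≠ 0 ∧
    R = (∫ x, ‖gradient u x‖ ^ 2) / (∫ x, u x ^ 2) }

/-- Radius of the ball `Ω♯` with the same Lebesgue measure as `Ω`. -/
def sharpRadius (N : ℕ) (Ω : Set (euc N)) : ℝ :=
  ((volume Ω).toReal / ballVol N) ^ ((1 : ℝ) / N)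

/-- Isoperimetric deficit `δP(Ω) = Per(Ω)/Per(Ω♯) - 1`. -/
def perDeficit (N : ℕ) (Ω : Set (euc N)) : ℝ :=
  perim N Ω / perim N (ball (0 : euc N) (sharpRadius N Ω)) - 1

/-- Faber-Krahn deficit `δλ(Ω) = λ(Ω)/λ(Ω♯) - 1`. -/
def fkDeficit (N : ℕ) (Ω : Set (euc N)) : ℝ :=
  firstEigenvalue N Ω / firstEigenvalue N (ball (0 : euc N) (sharpRadius N Ω)) - 1

/-- A one-parameter family `Ω t` of subsets of `ℝ^N` smoothly converges to `Ω₀` as `t → 0`. -/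
structure SmoothlyConverges (N : ℕ) (Ω : ℝ → Set (euc N)) (Ω₀ : Set (euc N)) where
  δ : ℝ
  δ_pos : 0 < δ
  Φ : ℝ → euc N → euc N
  Φinv : ℝ → euc N → euc N
  left_inv : ∀ t ∈ Ico (0 : ℝ) δ, Function.LeftInverse (Φinv t) (Φ t)
  right_inv : ∀ t ∈ Ico (0 : ℝ) δ, Function.RightInverse (Φinv t) (Φ t)
  smooth_x : ∀ t ∈ Ico (0 : ℝ) δ, ContDiff ℝ (⊤ : ℕ∞) (Φ t)
  smooth_x_inv : ∀ t ∈ Ico (0 : ℝ) δ, ContDiff ℝ (⊤ : ℕ∞) (Φinv t)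
  smooth_t : ∀ x, ContDiffOn ℝ (⊤ : ℕ∞) (fun t => Φ t x) (Ico (0 : ℝ) δ)
  smooth_t_inv : ∀ x, ContDiffOn ℝ (⊤ : ℕ∞) (fun t => Φinv t x) (Ico (0 : ℝ) δ)
  init : Ω 0 = Ω₀
  image : ∀ t ∈ Ico (0 : ℝ) δ, Ω t = Φ t '' Ω₀

/-- The Laplacian of `f : ℝ^N → ℝ`, as the trace of the second derivative. -/
def lap (N : ℕ) (f : euc N → ℝ) (x : euc N) : ℝ :=
  ∑ i : Fin N,
    iteratedFDeriv ℝ 2 f x ![EuclideanSpace.single i 1, EuclideanSpace.single i 1]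

/-- The divergence of a vector field on `ℝ^N`. -/
def diver (N : ℕ) (f : euc N → euc N) (x : euc N) : ℝ :=
  ∑ i : Fin N, ⟪fderiv ℝ f x (EuclideanSpace.single i 1), (EuclideanSpace.single i 1 : euc N)⟫

/-- The constant `G_N`: the modulus of the gradient on the boundary of the normalized first
eigenfunction of the unit ball. -/
def GN (N : ℕ) : ℝ :=
  (besselJzero ((N : ℝ) / 2 - 1)) ^ 2 *
      deriv (besselJ ((N : ℝ) / 2 - 1)) (besselJzero ((N : ℝ) / 2 - 1)) /
    Real.sqrt (N * ballVol N *
      ∫ r in (0 : ℝ)..(besselJzero ((N : ℝ) / 2 - 1)), r * besselJ ((N : ℝ) / 2 - 1) r ^ 2)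

/-- The optimal constant `C_N` of the paper. -/
def CN (N : ℕ) : ℝ :=
  (N * (N + 1) *
      ∫ r in (0 : ℝ)..(besselJzero ((N : ℝ) / 2 - 1)), r * besselJ ((N : ℝ) / 2 - 1) r ^ 2) /
    (2 * (besselJzero ((N : ℝ) / 2 - 1) *
        deriv (besselJ ((N : ℝ) / 2 - 1)) (besselJzero ((N : ℝ) / 2 - 1))) ^ 2 *
      ((besselJzero ((N : ℝ) / 2 - 1)) ^ 2 - N))

end

section BesselAuxSection

namespace BesselAux
open Real MeasureTheory intervalIntegral

noncomputable def c (ν : ℝ) (m : ℕ) : ℝ := (-1 : ℝ) ^ m / (m.factorial * Real.Gamma (m + ν + 1))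

noncomputable def g (ν u : ℝ) : ℝ := ∑' m : ℕ, c ν m * u ^ m

lemma gamma_arg_pos (ν : ℝ) (hν : 0 ≤ ν) (m : ℕ) : (0:ℝ) < m + ν + 1 := by positivity

lemma Gamma_pos (ν : ℝ) (hν : 0 ≤ ν) (m : ℕ) : 0 < Real.Gamma ((m:ℝ) + ν + 1) :=
  Real.Gamma_pos_of_pos (gamma_arg_pos ν hν m)

lemma Gamma_succ (ν : ℝ) (hν : 0 ≤ ν) (m : ℕ) :
    Real.Gamma ((m+1 : ℕ) + ν + 1) = ((m:ℝ) + ν + 1) * Real.Gamma (m + ν + 1) := by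
  have h : ((m+1 : ℕ) : ℝ) + ν + 1 = ((m:ℝ) + ν + 1) + 1 := by push_cast; ring
  rw [h, Real.Gamma_add_one (gamma_arg_pos ν hν m).ne']

lemma Gamma_ge (ν : ℝ) (hν : 0 ≤ ν) (m : ℕ) :
    (m.factorial : ℝ) * Real.Gamma (ν + 1) ≤ Real.Gamma (m + ν + 1) := by
  induction m with
  | zero => simp
  | succ m ih =>
    rw [Gamma_succ ν hν m]
    have h2 : ((m:ℝ) + 1) ≤ (m:ℝ) + ν + 1 := by linarith
    have hg : 0 < Real.Gamma (ν + 1) := Real.Gamma_pos_of_pos (by linarith)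
    calc ((m+1 : ℕ).factorial : ℝ) * Real.Gamma (ν + 1)
        = ((m:ℝ)+1) * ((m.factorial : ℝ) * Real.Gamma (ν + 1)) := by
          push_cast [Nat.factorial_succ]; ring
      _ ≤ ((m:ℝ) + ν + 1) * Real.Gamma (m + ν + 1) := by
          apply mul_le_mul h2 ih (by positivity) (by positivity)

lemma abs_c_le (ν : ℝ) (hν : 0 ≤ ν) (m : ℕ) :
    |c ν m| ≤ (1 / Real.Gamma (ν + 1)) / m.factorial := by
  have hg : 0 < Real.Gamma (ν + 1) := Real.Gamma_pos_of_pos (by linarith)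
  have hG := Gamma_pos ν hν m
  have hge := Gamma_ge ν hν m
  have hfac : (1:ℝ) ≤ (m.factorial : ℝ) := by exact_mod_cast m.factorial_pos
  have habs : |c ν m| = 1 / ((m.factorial : ℝ) * Real.Gamma (m + ν + 1)) := by
    rw [c, abs_div, abs_pow, abs_neg, abs_one, one_pow]
    congr 1
    rw [abs_of_pos (by positivity)]
  rw [habs, div_div, div_le_div_iff₀ (by positivity) (by positivity)]
  nlinarith [mul_le_mul_of_nonneg_left hge (le_of_lt hg),
    mul_le_mul_of_nonneg_right hfac (le_of_lt (mul_pos hg hG))]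

lemma summable_abs (ν : ℝ) (hν : 0 ≤ ν) (u : ℝ) :
    Summable (fun m : ℕ => |c ν m * u ^ m|) := by
  apply Summable.of_nonneg_of_le (fun m => abs_nonneg _)
    (f := fun m => (1 / Real.Gamma (ν + 1)) * (|u| ^ m / m.factorial))
  · intro m
    rw [abs_mul, abs_pow]
    calc |c ν m| * |u| ^ m ≤ ((1 / Real.Gamma (ν + 1)) / m.factorial) * |u| ^ m := by
          apply mul_le_mul_of_nonneg_right (abs_c_le ν hν m) (by positivity)
      _ = (1 / Real.Gamma (ν + 1)) * (|u| ^ m / m.factorial) := by ring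
  · exact (Real.summable_pow_div_factorial |u|).mul_left _

lemma summable_g (ν : ℝ) (hν : 0 ≤ ν) (u : ℝ) :
    Summable (fun m : ℕ => c ν m * u ^ m) :=
  (summable_abs ν hν u).of_abs

lemma g_rec (ν : ℝ) (hν : 0 ≤ ν) (u : ℝ) :
    g ν u = (ν+1) * g (ν+1) u - u * g (ν+2) u := by
  have hcoef : ∀ m : ℕ, (ν+1) * c (ν+1) (m+1) - c ν (m+1) = c (ν+2) m := by
    intro m
    have e1 : ((m+1:ℕ):ℝ) + (ν+1) + 1 = ((m:ℕ):ℝ) + (ν+2) + 1 := by push_cast; ring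
    have e2 : ((m+1:ℕ):ℝ) + ν + 1 = (((m:ℕ):ℝ) + (ν+1) + 1) := by push_cast; ring
    have hg1 : 0 < Real.Gamma (((m:ℕ):ℝ) + (ν+1) + 1) := Gamma_pos (ν+1) (by linarith) m
    have e3 : ((m:ℕ):ℝ) + (ν+2) + 1 = (((m:ℕ):ℝ) + (ν+1) + 1) + 1 := by ring
    have hgs : Real.Gamma (((m:ℕ):ℝ) + (ν+2) + 1)
        = ((m:ℝ) + ν + 2) * Real.Gamma (((m:ℕ):ℝ) + (ν+1) + 1) := by
      rw [e3, Real.Gamma_add_one (by positivity)]; ring_nf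
    simp only [c, e1, e2, hgs]
    have hfs : (((m+1:ℕ).factorial :ℝ)) = ((m:ℝ)+1) * m.factorial := by
      push_cast [Nat.factorial_succ]; ring
    rw [hfs]
    have hf : (0:ℝ) < m.factorial := by positivity
    field_simp
    ring
  have hc0 : (ν+1) * c (ν+1) 0 - c ν 0 = 0 := by
    have hg0 : 0 < Real.Gamma (((0:ℕ):ℝ) + ν + 1) := Gamma_pos ν hν 0
    have : Real.Gamma (((0:ℕ):ℝ) + (ν+1) + 1) = (ν + 1) * Real.Gamma (((0:ℕ):ℝ) + ν + 1) := by
      have e : ((0:ℕ):ℝ) + (ν+1) + 1 = (((0:ℕ):ℝ) + ν + 1) + 1 := by ring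
      rw [e, Real.Gamma_add_one (by push_cast; positivity)]; push_cast; ring_nf
    simp only [c, this]
    have : (0:ℝ) < Real.Gamma (((0:ℕ):ℝ) + ν + 1) := Gamma_pos ν hν 0
    field_simp
    ring
  set f : ℕ → ℝ := fun m => ((ν+1) * c (ν+1) m - c ν m) * u ^ m with hf
  have hSf : Summable f := by
    have h1 : Summable (fun m => (ν+1) * (c (ν+1) m * u ^ m)) :=
      ((summable_g (ν+1) (by linarith) u).mul_left _)
    have h2 := summable_g ν hν u
    have := h1.sub h2
    apply this.congr
    intro m; simp [hf]; ring
  have key : ∑' m, f m = u * g (ν+2) u := by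
    rw [Summable.tsum_eq_zero_add hSf]
    have hf0 : f 0 = 0 := by simp [hf, hc0]
    rw [hf0, zero_add]
    have : ∀ m : ℕ, f (m+1) = u * (c (ν+2) m * u ^ m) := by
      intro m
      simp only [hf]
      rw [hcoef m]
      ring
    rw [tsum_congr this, tsum_mul_left]
    rfl
  have split : ∑' m, f m = (ν+1) * g (ν+1) u - g ν u := by
    have h1 : Summable (fun m => (ν+1) * (c (ν+1) m * u ^ m)) :=
      ((summable_g (ν+1) (by linarith) u).mul_left _)
    have h2 := summable_g ν hν u
    have : ∑' m, f m = ∑' m, ((ν+1) * (c (ν+1) m * u^m) - c ν m * u^m) := by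
      apply tsum_congr; intro m; simp [hf]; ring
    rw [this, Summable.tsum_sub h1 h2, tsum_mul_left]
    rfl
  have := split.symm.trans key
  unfold g at *
  linarith

lemma g_pos (ν : ℝ) (hν : 0 ≤ ν) (u : ℝ) (hu0 : 0 ≤ u) (hu : u < ν + 1) : 0 < g ν u := by
  set t : ℕ → ℝ := fun m => c ν m * u ^ m with ht
  have hsum : Summable t := summable_g ν hν u
  have h2k : Summable (fun k : ℕ => t (2 * k)) :=
    hsum.comp_injective (fun a b h => by omega)
  have h2k1 : Summable (fun k : ℕ => t (2 * k + 1)) :=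
    hsum.comp_injective (fun a b h => by omega)
  have hsplit : ∑' k, t (2*k) + ∑' k, t (2*k+1) = ∑' m, t m := tsum_even_add_odd h2k h2k1
  have hg : g ν u = ∑' k, (t (2*k) + t (2*k+1)) := by
    rw [g, ← hsplit, Summable.tsum_add h2k h2k1]
  have hpairval : ∀ k : ℕ, t (2*k) + t (2*k+1) =
      u ^ (2*k) * ((((2*k:ℕ):ℝ)+1) * (((2*k:ℕ):ℝ)+ν+1) - u) /
        (((((2*k:ℕ):ℝ))+1) * ((((2*k:ℕ):ℝ))+ν+1) * (2*k:ℕ).factorial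
          * Real.Gamma (((2*k:ℕ):ℝ) + ν + 1)) := by
    intro k
    set m := 2*k with hm
    have hGm := Gamma_pos ν hν m
    have hfs : (((m+1:ℕ).factorial :ℝ)) = ((m:ℝ)+1) * m.factorial := by
      push_cast [Nat.factorial_succ]; ring
    have hgs : Real.Gamma (((m+1:ℕ):ℝ) + ν + 1) = ((m:ℝ) + ν + 1) * Real.Gamma ((m:ℝ) + ν + 1) := by
      have e : ((m+1:ℕ):ℝ) + ν + 1 = (((m:ℕ):ℝ) + ν + 1) + 1 := by push_cast; ring
      rw [e, Real.Gamma_add_one (by positivity)]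
    have heven : (-1:ℝ)^m = 1 := by rw [hm, pow_mul]; norm_num
    have hodd : (-1:ℝ)^(m+1) = -1 := by rw [pow_succ, heven]; norm_num
    have hfp : (0:ℝ) < m.factorial := by positivity
    have e2k1 : (2*k+1 : ℕ) = m + 1 := by omega
    simp only [ht, c, e2k1, heven, hodd, hfs, hgs]
    rw [pow_succ]
    field_simp
    ring
  have hpair : ∀ k : ℕ, 0 ≤ t (2*k) + t (2*k+1) := by
    intro k
    rw [hpairval k]
    have hGm := Gamma_pos ν hν (2*k)
    have h1 : (0:ℝ) < (((2*k:ℕ):ℝ))+1 := by positivity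
    have h2 : (0:ℝ) < (((2*k:ℕ):ℝ))+ν+1 := by positivity
    have h3 : (0:ℝ) ≤ ((((2*k:ℕ):ℝ))+1) * ((((2*k:ℕ):ℝ))+ν+1) - u := by
      nlinarith [(Nat.cast_nonneg (2*k) : (0:ℝ) ≤ (2*k:ℕ))]
    have hfp : (0:ℝ) < (2*k:ℕ).factorial := by positivity
    positivity
  have hpair0 : 0 < t 0 + t 1 := by
    have hv := hpairval 0
    norm_num at hv
    rw [hv]
    have hGm : 0 < Real.Gamma ((0:ℝ) + ν + 1) := by
      have := Gamma_pos ν hν 0; simpa using this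
    have hnum : (0:ℝ) < (ν + 1) - u := by nlinarith
    have : (0:ℝ) < Real.Gamma (ν + 1) := by
      have := hGm; rw [zero_add] at this; exact this
    positivity
  rw [hg]
  exact Summable.tsum_pos (h2k.add h2k1) hpair 0 (by simpa using hpair0)

lemma g_contOn (ν : ℝ) (hν : 0 ≤ ν) (R : ℝ) (hR : 0 < R) :
    ContinuousOn (g ν) (Set.Icc (-R) R) := by
  have hsum : Summable (fun m : ℕ => |c ν m| * R ^ m) := by
    have := summable_abs ν hν R
    apply this.congr
    intro m
    rw [abs_mul, abs_pow, abs_of_pos hR]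
  have := tendstoUniformlyOn_tsum hsum
    (f := fun m (x:ℝ) => c ν m * x ^ m) (s := Set.Icc (-R) R) ?_
  · exact this.continuousOn (Filter.Frequently.of_forall fun n => by
      apply continuousOn_finset_sum
      intro i _
      exact (continuous_const.mul (continuous_pow i)).continuousOn)
  · intro n x hx
    rw [Real.norm_eq_abs, abs_mul, abs_pow]
    apply mul_le_mul_of_nonneg_left _ (abs_nonneg _)
    apply pow_le_pow_left₀ (abs_nonneg _)
    rw [abs_le]; exact ⟨hx.1, hx.2⟩

lemma g_cont (ν : ℝ) (hν : 0 ≤ ν) : Continuous (g ν) := by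
  rw [continuous_iff_continuousAt]
  intro x
  have hR : 0 < |x| + 1 := by positivity
  have := g_contOn ν hν (|x|+1) hR
  apply this.continuousAt
  apply Icc_mem_nhds
  · cases abs_cases x with
    | inl h => linarith [abs_nonneg x, h.1]
    | inr h => linarith [h.1]
  · cases abs_cases x with
    | inl h => linarith [h.1]
    | inr h => linarith [abs_nonneg x, h.1]

lemma g_integral (ν : ℝ) (hν : 0 ≤ ν) (t : ℝ) (ht : 0 < t) :
    ∫ s in (0:ℝ)..t, s ^ ν * g ν s = t ^ (ν+1) * g (ν+1) t := by
  set K : ℝ := ∑' m : ℕ, |c ν m| * t ^ m with hK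
  have hKsum : Summable (fun m : ℕ => |c ν m| * t ^ m) := by
    apply (summable_abs ν hν t).congr
    intro m; rw [abs_mul, abs_pow, abs_of_pos ht]
  set F : ℕ → ℝ → ℝ := fun n s => ∑ m ∈ Finset.range n, c ν m * s ^ ((m:ℝ) + ν) with hF
  have hFmeas : ∀ n, AEStronglyMeasurable (F n) (volume.restrict (Set.uIoc 0 t)) := by
    intro n
    apply Continuous.aestronglyMeasurable
    apply continuous_finset_sum
    intro m _
    exact continuous_const.mul (continuous_iff_continuousAt.2
      (fun x => Real.continuousAt_rpow_const x _ (Or.inr (by positivity))))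
  have hbound : ∀ n, ∀ᵐ s ∂volume, s ∈ Set.uIoc 0 t → ‖F n s‖ ≤ K * s ^ ν := by
    intro n
    filter_upwards with s hs
    rw [Set.uIoc_of_le ht.le] at hs
    have hs0 : 0 < s := hs.1
    calc ‖F n s‖ ≤ ∑ m ∈ Finset.range n, ‖c ν m * s ^ ((m:ℝ) + ν)‖ := norm_sum_le _ _
      _ ≤ ∑ m ∈ Finset.range n, |c ν m| * t ^ m * s ^ ν := by
          apply Finset.sum_le_sum
          intro m _
          rw [Real.norm_eq_abs, abs_mul]
          have : s ^ ((m:ℝ) + ν) = s ^ m * s ^ ν := by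
            rw [Real.rpow_add hs0, Real.rpow_natCast]
          rw [this, abs_mul]
          rw [abs_of_pos (Real.rpow_pos_of_pos hs0 ν), abs_pow, abs_of_pos hs0]
          have hsm : s ^ m ≤ t ^ m := pow_le_pow_left₀ hs0.le hs.2 m
          have := Real.rpow_pos_of_pos hs0 ν
          nlinarith [mul_le_mul_of_nonneg_right
            (mul_le_mul_of_nonneg_left hsm (abs_nonneg (c ν m))) this.le]
      _ ≤ K * s ^ ν := by
          rw [← Finset.sum_mul]
          apply mul_le_mul_of_nonneg_right _ (Real.rpow_pos_of_pos hs0 ν).le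
          exact Summable.sum_le_tsum _ (fun m _ => by positivity) hKsum
  have hbint : IntervalIntegrable (fun s => K * s ^ ν) volume 0 t :=
    (intervalIntegral.intervalIntegrable_rpow' (by linarith)).const_mul K
  have hlim : ∀ᵐ s ∂volume, s ∈ Set.uIoc 0 t →
      Filter.Tendsto (fun n => F n s) Filter.atTop (nhds (s ^ ν * g ν s)) := by
    filter_upwards with s hs
    rw [Set.uIoc_of_le ht.le] at hs
    have hs0 : 0 < s := hs.1
    have hFeq : ∀ n, F n s = (∑ m ∈ Finset.range n, c ν m * s ^ m) * s ^ ν := by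
      intro n
      rw [Finset.sum_mul]
      apply Finset.sum_congr rfl
      intro m _
      rw [Real.rpow_add hs0, Real.rpow_natCast]; ring
    simp only [hFeq]
    have := ((summable_g ν hν s).hasSum.tendsto_sum_nat).mul_const (s ^ ν)
    convert this using 2
    rw [g]; ring
  have hDCT := intervalIntegral.tendsto_integral_filter_of_dominated_convergence
    (μ := volume) (F := F) (f := fun s => s ^ ν * g ν s) (a := 0) (b := t)
    (fun s => K * s ^ ν)
    (Filter.Eventually.of_forall hFmeas) (Filter.Eventually.of_forall hbound) hbint hlim
  have hFint : ∀ n, ∫ s in (0:ℝ)..t, F n s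
      = ∑ m ∈ Finset.range n, c ν m * (t ^ ((m:ℝ) + ν + 1) / ((m:ℝ) + ν + 1)) := by
    intro n
    rw [intervalIntegral.integral_finset_sum]
    · apply Finset.sum_congr rfl
      intro m _
      rw [intervalIntegral.integral_const_mul,
        integral_rpow (Or.inl (by have := (Nat.cast_nonneg m : (0:ℝ) ≤ m); linarith))]
      congr 1
      rw [Real.zero_rpow (by positivity)]
      ring
    · intro m _
      exact ((intervalIntegral.intervalIntegrable_rpow'
        (by have := (Nat.cast_nonneg m : (0:ℝ) ≤ m); linarith)).const_mul _)
  have hterm : ∀ m : ℕ, c ν m * (t ^ ((m:ℝ) + ν + 1) / ((m:ℝ) + ν + 1))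
      = t ^ (ν+1) * (c (ν+1) m * t ^ m) := by
    intro m
    have h1 : t ^ ((m:ℝ) + ν + 1) = t ^ m * t ^ (ν+1) := by
      rw [← Real.rpow_natCast t m, ← Real.rpow_add ht]; ring_nf
    have hc : c ν m / ((m:ℝ) + ν + 1) = c (ν+1) m := by
      rw [c, c]
      have hgs : Real.Gamma ((m:ℝ) + (ν+1) + 1) = ((m:ℝ) + ν + 1) * Real.Gamma ((m:ℝ) + ν + 1) := by
        have e : ((m:ℕ):ℝ) + (ν+1) + 1 = (((m:ℕ):ℝ) + ν + 1) + 1 := by ring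
        rw [e, Real.Gamma_add_one (by positivity)]
      rw [hgs]
      have h2 := Gamma_pos ν hν m
      have h3 : (0:ℝ) < (m:ℝ) + ν + 1 := by positivity
      have hf : (0:ℝ) < m.factorial := by positivity
      field_simp
    rw [← hc, h1]
    ring
  have hSum2 : Summable (fun m : ℕ => t ^ (ν+1) * (c (ν+1) m * t ^ m)) :=
    (summable_g (ν+1) (by linarith) t).mul_left _
  have hlim2 : Filter.Tendsto (fun n => ∫ s in (0:ℝ)..t, F n s) Filter.atTop
      (nhds (t ^ (ν+1) * g (ν+1) t)) := by
    simp only [hFint]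
    have : ∑' m : ℕ, t ^ (ν+1) * (c (ν+1) m * t ^ m) = t ^ (ν+1) * g (ν+1) t := by
      rw [tsum_mul_left]; rfl
    rw [← this]
    have := hSum2.hasSum.tendsto_sum_nat
    apply this.congr
    intro n
    apply Finset.sum_congr rfl
    intro m _
    exact (hterm m).symm
  exact tendsto_nhds_unique hDCT hlim2

lemma g_succ_pos (ν : ℝ) (hν : 0 ≤ ν) (T : ℝ) (hT : 0 < T)
    (h : ∀ u ∈ Set.Ioc (0:ℝ) T, 0 < g ν u) :
    ∀ t ∈ Set.Ioc (0:ℝ) T, 0 < g (ν+1) t := by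
  intro t htm
  obtain ⟨ht0, htT⟩ := htm
  have hrpow_cont : Continuous (fun s : ℝ => s ^ ν) :=
    continuous_iff_continuousAt.2 (fun x => Real.continuousAt_rpow_const x ν (Or.inr hν))
  have hint : IntervalIntegrable (fun s => s ^ ν * g ν s) volume 0 t :=
    (hrpow_cont.mul (g_cont ν hν)).intervalIntegrable 0 t
  have hpos : 0 < ∫ s in (0:ℝ)..t, s ^ ν * g ν s := by
    apply intervalIntegral.intervalIntegral_pos_of_pos_on hint _ ht0
    intro x hx
    have hx0 : 0 < x := hx.1
    have : 0 < g ν x := h x ⟨hx0, le_of_lt (lt_of_lt_of_le hx.2 htT)⟩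
    have := Real.rpow_pos_of_pos hx0 ν
    positivity
  rw [g_integral ν hν t ht0] at hpos
  have hrp : 0 < t ^ (ν+1) := Real.rpow_pos_of_pos ht0 _
  nlinarith

lemma exists_nonpos (ν : ℝ) (hν : 0 ≤ ν) :
    ∃ u ∈ Set.Ioc (0:ℝ) ((ν+1)*(ν+3)/2), g ν u ≤ 0 := by
  by_contra hcon
  push_neg at hcon
  set T : ℝ := (ν+1)*(ν+3)/2 with hTdef
  have hT : 0 < T := by rw [hTdef]; nlinarith
  have h0 : ∀ u ∈ Set.Ioc (0:ℝ) T, 0 < g ν u := hcon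
  have h1 : ∀ u ∈ Set.Ioc (0:ℝ) T, 0 < g (ν+1) u := g_succ_pos ν hν T hT h0
  have h2 : ∀ u ∈ Set.Ioc (0:ℝ) T, 0 < g (ν+2) u := by
    have := g_succ_pos (ν+1) (by linarith) T hT h1
    intro u hu; have := this u hu
    have e : ν + 1 + 1 = ν + 2 := by ring
    rwa [e] at this
  have h3 : ∀ u ∈ Set.Ioc (0:ℝ) T, 0 < g (ν+3) u := by
    have := g_succ_pos (ν+2) (by linarith) T hT h2
    intro u hu; have := this u hu
    have e : ν + 2 + 1 = ν + 3 := by ring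
    rwa [e] at this
  have h4 : ∀ u ∈ Set.Ioc (0:ℝ) T, 0 < g (ν+4) u := by
    have := g_succ_pos (ν+3) (by linarith) T hT h3
    intro u hu; have := this u hu
    have e : ν + 3 + 1 = ν + 4 := by ring
    rwa [e] at this
  have hTT : T ∈ Set.Ioc (0:ℝ) T := ⟨hT, le_refl T⟩
  have P0 := h0 T hTT
  have P4 := h4 T hTT
  have R0 := g_rec ν hν T
  have R1 := g_rec (ν+1) (by linarith) T
  have R2 := g_rec (ν+2) (by linarith) T
  rw [show ν+1+1 = ν+2 by ring, show ν+1+2 = ν+3 by ring] at R1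
  rw [show ν+2+1 = ν+3 by ring, show ν+2+2 = ν+4 by ring] at R2
  have key : (ν+3) * g ν T + (ν+1) * T^2 * g (ν+4) T = 0 := by
    rw [hTdef] at R0 R1 R2 ⊢
    linear_combination (ν+3) * R0 + ((ν+1)*(ν+3)) * R1 + ((ν+1)*((ν+1)*(ν+3)/2)) * R2
  nlinarith [mul_pos P0 (show (0:ℝ) < ν+3 by linarith),
    mul_pos (mul_pos (show (0:ℝ) < ν+1 by linarith) (mul_pos hT hT)) P4]

lemma besselJ_eq (ν : ℝ) (x : ℝ) (hx : 0 < x) :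
    besselJ ν x = g ν ((x/2)^2) * (x/2) ^ ν := by
  rw [besselJ, g, ← tsum_mul_right]
  apply tsum_congr
  intro m
  have hx2 : 0 < x / 2 := by linarith
  have h1 : (x/2) ^ (2 * (m:ℝ) + ν) = (x/2) ^ (2*(m:ℝ)) * (x/2) ^ ν := by
    rw [← Real.rpow_add hx2]
  have h2 : (x/2) ^ (2*(m:ℝ)) = ((x/2)^2) ^ m := by
    rw [show (2 * (m:ℝ)) = ((2*m : ℕ) : ℝ) by push_cast; ring, Real.rpow_natCast, pow_mul]
  rw [h1, h2, c]; ring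

lemma besselJzero_bounds (ν : ℝ) (hν : 0 ≤ ν) :
    2 ≤ besselJzero ν ∧ (besselJzero ν)^2 ≤ 2*(ν+1)*(ν+3) := by
  obtain ⟨u₀, hu₀mem, hu₀⟩ := exists_nonpos ν hν
  have hg0 : 0 < g ν 0 := g_pos ν hν 0 le_rfl (by linarith)
  have hcont : ContinuousOn (g ν) (Set.Icc 0 u₀) := (g_cont ν hν).continuousOn
  have hsub := intermediate_value_Icc' (le_of_lt hu₀mem.1) hcont
  have h0mem : (0:ℝ) ∈ Set.Icc (g ν u₀) (g ν 0) := ⟨hu₀, le_of_lt hg0⟩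
  obtain ⟨u₁, hu₁mem, hu₁⟩ := hsub h0mem
  have hu₁ge : ν + 1 ≤ u₁ := by
    by_contra h
    exact absurd hu₁ (ne_of_gt (g_pos ν hν u₁ hu₁mem.1 (by linarith)))
  have hu₁pos : 0 < u₁ := by linarith
  have hu₁le : u₁ ≤ (ν+1)*(ν+3)/2 := le_trans hu₁mem.2 hu₀mem.2
  set x₁ : ℝ := 2 * Real.sqrt u₁ with hx₁def
  have hx₁pos : 0 < x₁ := by
    have := Real.sqrt_pos.mpr hu₁pos; positivity
  have hx₁sq : (x₁/2)^2 = u₁ := by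
    rw [hx₁def]
    rw [mul_div_cancel_left₀ _ (two_ne_zero)]
    exact Real.sq_sqrt hu₁pos.le
  have hx₁zero : besselJ ν x₁ = 0 := by
    rw [besselJ_eq ν x₁ hx₁pos, hx₁sq, hu₁]
    ring
  set S : Set ℝ := {x : ℝ | 0 < x ∧ besselJ ν x = 0} with hSdef
  have hmemS : x₁ ∈ S := ⟨hx₁pos, hx₁zero⟩
  have hlb : ∀ x ∈ S, 2 ≤ x := by
    rintro x ⟨hx0, hxz⟩
    rw [besselJ_eq ν x hx0] at hxz
    have hxr : (0:ℝ) < (x/2) ^ ν := Real.rpow_pos_of_pos (by linarith) ν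
    have hgz : g ν ((x/2)^2) = 0 := by
      rcases mul_eq_zero.mp hxz with h | h
      · exact h
      · exact absurd h (ne_of_gt hxr)
    have hge : ν + 1 ≤ (x/2)^2 := by
      by_contra h
      exact absurd hgz (ne_of_gt (g_pos ν hν _ (sq_nonneg _) (by linarith)))
    nlinarith
  have hne : S.Nonempty := ⟨x₁, hmemS⟩
  have hbdd : BddBelow S := ⟨2, hlb⟩
  constructor
  · exact le_csInf hne hlb
  · have h1 : besselJzero ν ≤ x₁ := csInf_le hbdd hmemS
    have h2 : 2 ≤ besselJzero ν := le_csInf hne hlb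
    have h3 : (besselJzero ν)^2 ≤ x₁^2 := by nlinarith
    have h4 : x₁^2 = 4 * u₁ := by
      rw [hx₁def, mul_pow]
      rw [Real.sq_sqrt hu₁pos.le]
      ring
    nlinarith

end BesselAux

end BesselAuxSection

/-- **Inequality (2.15):** for every integer `N ≥ 2`, with `z = j_{N/2-1}` the first positive
zero of `J_{N/2-1}`, one has `(z² - 2)N² + 5z²N - 2z⁴ > 0`. -/


theorem bessel_zero_polynomial_inequality (N : ℕ) (hN : 2 ≤ N) :
    0 < (besselJzero ((N : ℝ) / 2 - 1) ^ 2 - 2) * (N : ℝ) ^ 2 +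
        5 * besselJzero ((N : ℝ) / 2 - 1) ^ 2 * N -
        2 * besselJzero ((N : ℝ) / 2 - 1) ^ 4 := by
  have hn : (2:ℝ) ≤ (N:ℝ) := by exact_mod_cast hN
  set n : ℝ := (N:ℝ) with hndef
  set ν : ℝ := n / 2 - 1 with hνdef
  have hν : 0 ≤ ν := by rw [hνdef]; linarith
  obtain ⟨hz1, hz2⟩ := BesselAux.besselJzero_bounds ν hν
  set z : ℝ := besselJzero ν with hzdef
  have hs1 : 4 ≤ z^2 := by nlinarith
  have hs2 : z^2 ≤ n*(n+4)/2 := by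
    have e : 2*(ν+1)*(ν+3) = n*(n+4)/2 := by rw [hνdef]; ring
    exact le_of_le_of_eq hz2 e
  have hz4 : z^4 = (z^2)^2 := by ring
  rw [hz4]
  nlinarith [mul_nonneg (by linarith : (0:ℝ) ≤ z^2 - 4) (by linarith : (0:ℝ) ≤ n*(n+4)/2 - z^2),
    mul_nonneg (mul_nonneg (by linarith : (0:ℝ) ≤ z^2 - 4) (by linarith : (0:ℝ) ≤ n*(n+4)/2 - z^2))
      (by linarith : (0:ℝ) ≤ n - 2),
    mul_nonneg (by linarith : (0:ℝ) ≤ z^2 - 4) (by linarith : (0:ℝ) ≤ n - 2),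
    mul_nonneg (by linarith : (0:ℝ) ≤ n*(n+4)/2 - z^2) (by linarith : (0:ℝ) ≤ n - 2),
    sq_nonneg n, sq_nonneg (n-2), mul_pos (by linarith : (0:ℝ) < n) (by linarith : (0:ℝ) < n)]
end

section
/- Let N ≥ 10 be an integer and let z be any real number with N/2 − 1 ≤ z ≤ √(N/2) (√(N/2 + 1) + 1). Then (z² − 2) N² + 5 z² N − 2 z⁴ ≥ (N z² / 2)(N − 2^{3/2} √(N+2)) + (3/4) N (N − 6)(N − 2/3), and the right-hand side is strictly positive; in particular (z² − 2) N² + 5 z² N − 2 z⁴ > 0. -/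
open MeasureTheory Metric Set Filter Topology
open scoped RealInnerProductSpace

/-- **The elementary estimate of Lemma 2.3 for large dimension.**
For integers `N ≥ 10` and any real `z` with `N/2 - 1 ≤ z ≤ √(N/2)(√(N/2+1)+1)`,
`(z² - 2)N² + 5z²N - 2z⁴ ≥ (Nz²/2)(N - 2^{3/2}√(N+2)) + (3/4)N(N-6)(N-2/3) > 0`. -/
theorem polynomial_inequality_large_dimension (N : ℕ) (hN : 10 ≤ N) (z : ℝ)
    (hz1 : (N : ℝ) / 2 - 1 ≤ z)
    (hz2 : z ≤ Real.sqrt ((N : ℝ) / 2) * (Real.sqrt ((N : ℝ) / 2 + 1) + 1)) :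
    ((z ^ 2 - 2) * (N : ℝ) ^ 2 + 5 * z ^ 2 * N - 2 * z ^ 4 ≥
      (N : ℝ) * z ^ 2 / 2 * ((N : ℝ) - 2 ^ ((3 : ℝ) / 2) * Real.sqrt ((N : ℝ) + 2)) +
        3 / 4 * (N : ℝ) * ((N : ℝ) - 6) * ((N : ℝ) - 2 / 3)) ∧
    (0 < (N : ℝ) * z ^ 2 / 2 * ((N : ℝ) - 2 ^ ((3 : ℝ) / 2) * Real.sqrt ((N : ℝ) + 2)) +
        3 / 4 * (N : ℝ) * ((N : ℝ) - 6) * ((N : ℝ) - 2 / 3)) ∧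
    0 < (z ^ 2 - 2) * (N : ℝ) ^ 2 + 5 * z ^ 2 * N - 2 * z ^ 4 := by
  have hn : (10:ℝ) ≤ (N:ℝ) := by exact_mod_cast hN
  set n : ℝ := (N:ℝ) with hndef
  set s : ℝ := Real.sqrt (n/2+1) with hsdef
  set u : ℝ := Real.sqrt (n/2) with hudef
  have hs0 : 0 ≤ s := Real.sqrt_nonneg _
  have hu0 : 0 ≤ u := Real.sqrt_nonneg _
  have hs2 : s^2 = n/2+1 := Real.sq_sqrt (by linarith)
  have hu2 : u^2 = n/2 := Real.sq_sqrt (by linarith)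
  have h4s : (2:ℝ) ^ ((3:ℝ)/2) * Real.sqrt (n + 2) = 4 * s := by
    have h8 : (2:ℝ) ^ ((3:ℝ)/2) = Real.sqrt 8 := by
      rw [show ((3:ℝ)/2) = (3:ℝ) * (1/2) by ring, Real.rpow_mul (by norm_num),
        Real.sqrt_eq_rpow]
      norm_num
    have h16 : (4:ℝ) * s = Real.sqrt (16 * (n/2+1)) := by
      rw [Real.sqrt_mul (by norm_num), show Real.sqrt 16 = 4 by
        rw [show (16:ℝ) = 4^2 by norm_num, Real.sqrt_sq (by norm_num)]]
    rw [h8, h16, ← Real.sqrt_mul (by norm_num)]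
    congr 1
    ring
  have hz0 : 0 < z := by linarith
  have hzlb : n^2/4 - n + 1 ≤ z^2 := by
    have h := pow_le_pow_left₀ (by linarith : (0:ℝ) ≤ n/2-1) hz1 2
    nlinarith [h]
  have hzub : z^2 ≤ n^2/4 + n + n*s := by
    have h := pow_le_pow_left₀ (le_of_lt hz0) hz2 2
    have heq : (u*(s+1))^2 = n^2/4 + n + n*s := by
      linear_combination (s+1)^2 * hu2 + (n/2) * hs2
    rw [heq] at h
    exact h
  have hns : 4*s < n := by
    nlinarith [hs2, hs0, hn]
  have hpos : 0 < n * z ^ 2 / 2 * (n - 4*s) + 3 / 4 * n * (n - 6) * (n - 2 / 3) := by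
    have h1 : 0 < n * z ^ 2 / 2 * (n - 4*s) := by
      apply mul_pos (by positivity) (by linarith)
    nlinarith [hn]
  have hC : 3*n ≤ n^2/2 + 5*n + 2*n*s - 2*z^2 := by linarith
  have hmain : (z ^ 2 - 2) * n ^ 2 + 5 * z ^ 2 * n - 2 * z ^ 4 ≥
      n * z ^ 2 / 2 * (n - 4*s) + 3 / 4 * n * (n - 6) * (n - 2 / 3) := by
    have k1 := mul_le_mul_of_nonneg_left hC (sq_nonneg z)
    have k2 := mul_le_mul_of_nonneg_left hzlb (by linarith : (0:ℝ) ≤ 3*n)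
    nlinarith [k1, k2]
  rw [h4s]
  exact ⟨hmain, hpos, by linarith⟩
end
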